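/- arXiv:1003.3576 — 2 statements merged into one kernel-verified Lean document; each statement's English description precedes it below -/
import Mathlib

section
/- There exists an absolute constant c > 0 such that the following holds. Let q be an odd prime power and let f, h ∈ F_q[X] be polynomials of degree at most 2 such that for every (λ, μ) ∈ F_q × F_q with (λ, μ) ≠ (0, 0) the polynomial λ·f + μ·h is not constant. Then for all nonempty subsets A₁, A₂, A₃ ⊆ F_q, max(|f(A₁) + A₂|, |h(A₁) + A₃|) ≥ c · min(√(|A₁|·q), √(|A₁|²·|A₂|·|A₃|/q)), where f(A₁) = {f(a) : a ∈ A₁}. -/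
/-! The curve `Φ x = (f x, h x)` in `F²` is a Sidon set: the nondegeneracy condition makes `Φ`
an invertible affine image of the parabola `x ↦ (x, x²)`, whose differences determine the pair of
points as soon as `2 ≠ 0`. Let `r z` count the `x` with `z - Φ x ∈ A₂ × A₃`. Then
`∑ r = q |A₂| |A₃|`, and the Sidon property gives `∑ r² ≤ q |A₂| |A₃| + (|A₂| |A₃|)²`, so `r` has
variance at most `q |A₂| |A₃|` about its mean `|A₂| |A₃| / q`. On the other hand `r` has mass at
least `|A₁| |A₂| |A₃|` on the box `(f(A₁) + A₂) × (h(A₁) + A₃)`; by Cauchy–Schwarz this mass is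
at most `mean · |box| + √(|box| · q |A₂| |A₃|)`, and whichever term dominates gives one of the two
lower bounds for `|box| ≤ max(|f(A₁) + A₂|, |h(A₁) + A₃|)²`. -/

open Finset
open scoped Pointwise

section Representations

variable {ι G : Type*} [Fintype ι] [AddCommGroup G] [DecidableEq G]

def reprCount (Φ : ι → G) (B : Finset G) (x : G) : ℕ := #{i | x - Φ i ∈ B}

lemma card_filter_sub_mem [Fintype G] (B : Finset G) (c : G) : #{x | x - c ∈ B} = #B :=
  card_equiv (Equiv.subRight c) (by simp)

lemma sum_reprCount [Fintype G] (Φ : ι → G) (B : Finset G) :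
    ∑ x, reprCount Φ B x = Fintype.card ι * #B := by
  refine (sum_card_bipartiteAbove_eq_sum_card_bipartiteBelow (fun x i => x - Φ i ∈ B)).trans ?_
  simp [bipartiteBelow, card_filter_sub_mem]

lemma reprCount_sq [DecidableEq ι] (Φ : ι → G) (B : Finset G) (x : G) :
    reprCount Φ B x ^ 2 = reprCount Φ B x + #({i | x - Φ i ∈ B} : Finset ι).offDiag := by
  rw [reprCount, sq, ← card_product, ← diag_union_offDiag,
    card_union_of_disjoint (disjoint_diag_offDiag _), diag_card]

lemma sum_card_offDiag_le [Fintype G] [DecidableEq ι] {Φ : ι → G}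
    (hΦ : Set.InjOn (fun p : ι × ι => Φ p.1 - Φ p.2) {p | p.1 ≠ p.2}) (B : Finset G) :
    ∑ x, #({i | x - Φ i ∈ B} : Finset ι).offDiag ≤ #B ^ 2 := by
  rw [← card_sigma, sq, ← card_product]
  refine card_le_card_of_injOn (fun y => (y.1 - Φ y.2.1, y.1 - Φ y.2.2)) ?_ ?_
  · intro y hy
    simp_all
  · rintro ⟨x, i, j⟩ hx ⟨y, k, l⟩ hy hxy
    simp only [coe_sigma, Set.mem_sigma_iff, mem_coe, mem_offDiag, mem_filter, mem_univ,
      true_and, Prod.mk.injEq] at hx hy hxy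
    obtain ⟨rfl, rfl⟩ : i = k ∧ j = l := Prod.mk.inj <|
      hΦ hx.2.2 hy.2.2 (by simp only; rw [← sub_sub_sub_cancel_left _ _ x, hxy.1, hxy.2]; abel)
    obtain rfl : x = y := by simpa using hxy.1
    rfl

lemma sum_reprCount_sq_le [Fintype G] {Φ : ι → G}
    (hΦ : Set.InjOn (fun p : ι × ι => Φ p.1 - Φ p.2) {p | p.1 ≠ p.2}) (B : Finset G) :
    ∑ x, reprCount Φ B x ^ 2 ≤ Fintype.card ι * #B + #B ^ 2 := by
  classical
  simp only [reprCount_sq, sum_add_distrib, sum_reprCount]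
  exact Nat.add_le_add_left (sum_card_offDiag_le hΦ B) _

lemma card_mul_card_le_sum_reprCount (Φ : ι → G) {A : Finset ι} {B X : Finset G}
    (hX : ∀ a ∈ A, ∀ b ∈ B, Φ a + b ∈ X) :
    #A * #B ≤ ∑ x ∈ X, reprCount Φ B x := by
  rw [← card_product]
  simp only [reprCount]
  rw [← card_sigma]
  refine card_le_card_of_injOn (fun p => ⟨Φ p.1 + p.2, p.1⟩) ?_ ?_
  · intro p hp
    simp_all
  · rintro ⟨a, b⟩ - ⟨a', b'⟩ - h
    obtain ⟨hab, rfl⟩ : Φ a + b = Φ a' + b' ∧ a = a' := by simpa using h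
    simpa using hab

end Representations

lemma sum_le_card_mul_add_sqrt {α : Type*} [Fintype α] (r : α → ℝ) (μ : ℝ) (X : Finset α) :
    ∑ x ∈ X, r x ≤ #X * μ + √(#X * ∑ x, (r x - μ) ^ 2) := by
  have hsplit : ∑ x ∈ X, r x = #X * μ + ∑ x ∈ X, (r x - μ) := by
    rw [sum_sub_distrib, sum_const, nsmul_eq_mul]; ring
  have hsq : (∑ x ∈ X, (r x - μ)) ^ 2 ≤ #X * ∑ x, (r x - μ) ^ 2 :=
    sq_sum_le_card_mul_sum_sq.trans <| mul_le_mul_of_nonneg_left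
      (sum_le_univ_sum_of_nonneg fun _ => sq_nonneg _) (Nat.cast_nonneg _)
  rw [hsplit]
  gcongr
  exact (le_abs_self _).trans (Real.abs_le_sqrt hsq)

lemma sum_sub_sq_eq {α : Type*} [Fintype α] (r : α → ℝ) (μ : ℝ) :
    ∑ x, (r x - μ) ^ 2 = ∑ x, r x ^ 2 - 2 * μ * ∑ x, r x + Fintype.card α * μ ^ 2 := by
  simp only [sub_sq, sum_add_distrib, sum_sub_distrib, sum_const, card_univ, nsmul_eq_mul,
    ← sum_mul, ← mul_sum]
  ring

theorem card_mul_card_le_of_injOn_sub {ι G : Type*} [Fintype ι] [AddCommGroup G] [Fintype G]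
    [DecidableEq G] {Φ : ι → G}
    (hΦ : Set.InjOn (fun p : ι × ι => Φ p.1 - Φ p.2) {p | p.1 ≠ p.2})
    (hG : Fintype.card G ≤ Fintype.card ι ^ 2) {A : Finset ι} {B X : Finset G}
    (hX : ∀ a ∈ A, ∀ b ∈ B, Φ a + b ∈ X) :
    (#A * #B : ℝ) ≤
      #X * (Fintype.card ι * #B / Fintype.card G) + √(#X * (Fintype.card ι * #B)) := by
  set μ : ℝ := Fintype.card ι * #B / Fintype.card G
  have hsum : ∑ x, (reprCount Φ B x : ℝ) = Fintype.card ι * #B := by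
    exact_mod_cast sum_reprCount Φ B
  have hsum_sq : ∑ x, (reprCount Φ B x : ℝ) ^ 2 ≤ Fintype.card ι * #B + #B ^ 2 := by
    exact_mod_cast sum_reprCount_sq_le hΦ B
  -- `hG` is what lets the squared mean absorb the `#B ^ 2` term of the second moment
  have hmean : (#B : ℝ) ^ 2 ≤ Fintype.card G * μ ^ 2 := by
    have : (Fintype.card G : ℝ) ≤ Fintype.card ι ^ 2 := by exact_mod_cast hG
    rw [div_pow, mul_div_assoc', mul_pow, le_div_iff₀ (by positivity), ← mul_assoc, mul_comm, sq]
    gcongr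
  have hvar : ∑ x, ((reprCount Φ B x : ℝ) - μ) ^ 2 ≤ Fintype.card ι * #B := by
    rw [sum_sub_sq_eq, hsum]
    calc _ = ∑ x, (reprCount Φ B x : ℝ) ^ 2 - Fintype.card G * μ ^ 2 := by
            simp only [μ]; field_simp; ring
      _ ≤ _ := by linarith
  calc (#A * #B : ℝ) ≤ ∑ x ∈ X, (reprCount Φ B x : ℝ) := by
        exact_mod_cast card_mul_card_le_sum_reprCount Φ hX
    _ ≤ #X * μ + √(#X * ∑ x, ((reprCount Φ B x : ℝ) - μ) ^ 2) := sum_le_card_mul_add_sqrt _ μ X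
    _ ≤ _ := by gcongr

lemma half_min_sqrt_le_max {a k q s t : ℝ} (ha : 0 ≤ a) (hk : 0 < k) (hq : 0 < q) (hs : 0 ≤ s)
    (ht : 0 ≤ t) (h : a * k ≤ s * t * (k / q) + √(s * t * (q * k))) :
    1 / 2 * min √(a * q) √(a ^ 2 * k / q) ≤ max s t := by
  have hM : 0 ≤ max s t := le_max_of_le_left hs
  have hst : s * t ≤ max s t ^ 2 := by
    rw [sq]; exact mul_le_mul (le_max_left s t) (le_max_right s t) ht hM
  suffices min √(a * q) √(a ^ 2 * k / q) ≤ 2 * max s t by linarith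
  rcases le_or_gt (a * k) (2 * (s * t * (k / q))) with hc | hc
  · refine (min_le_left _ _).trans ((Real.sqrt_le_left (by positivity)).2 ?_)
    have : a * q * k ≤ 2 * (s * t) * k :=
      calc a * q * k = a * k * q := by ring
        _ ≤ 2 * (s * t * (k / q)) * q := by gcongr
        _ = 2 * (s * t) * k := by field_simp
    nlinarith [le_of_mul_le_mul_right this hk]
  · refine (min_le_right _ _).trans ((Real.sqrt_le_left (by positivity)).2 ?_)
    have hroot : a * k / 2 ≤ √(s * t * (q * k)) := by linarith
    have hsq := (Real.le_sqrt (by positivity) (by positivity)).1 hroot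
    have : a ^ 2 * k * k ≤ 4 * (s * t) * q * k := by linarith
    rw [div_le_iff₀ hq]
    nlinarith [le_of_mul_le_mul_right this hk]

lemma FiniteField.two_ne_zero_of_odd_card {F : Type*} [Field F] [Fintype F]
    (hodd : Odd (Fintype.card F)) : (2 : F) ≠ 0 := by
  intro h2
  obtain ⟨k, hk⟩ := hodd
  have hcard := FiniteField.cast_card_eq_zero F
  rw [hk, Nat.cast_add, Nat.cast_mul, Nat.cast_ofNat, h2] at hcard
  simp at hcard

lemma injOn_sub_sq_sub_sq {F : Type*} [Field F] (h2 : (2 : F) ≠ 0) :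
    Set.InjOn (fun p : F × F => (p.1 - p.2, p.1 ^ 2 - p.2 ^ 2)) {p | p.1 ≠ p.2} := by
  rintro ⟨a, a'⟩ hne ⟨b, b'⟩ - hab
  simp only [Prod.mk.injEq] at hab
  obtain ⟨hd, hsq⟩ := hab
  -- dividing the difference of squares by the difference gives the sums
  have hsum : a + a' = b + b' := by
    refine mul_left_cancel₀ (sub_ne_zero.2 hne) ?_
    linear_combination hsq - (b + b') * hd
  simp only [Prod.mk.injEq]
  constructor
  · exact mul_left_cancel₀ h2 (by linear_combination hd + hsum)
  · exact mul_left_cancel₀ h2 (by linear_combination hsum - hd)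

lemma injective_of_mul_sub_mul_ne_zero {F : Type*} [Field F] {a b c d : F}
    (hdet : a * d - b * c ≠ 0) :
    Function.Injective (fun v : F × F => (a * v.1 + b * v.2, c * v.1 + d * v.2)) := by
  rintro ⟨u, v⟩ ⟨u', v'⟩ huv
  simp only [Prod.mk.injEq] at huv ⊢
  obtain ⟨h1, h2⟩ := huv
  constructor
  · refine mul_left_cancel₀ hdet ?_
    linear_combination d * h1 - b * h2
  · refine mul_left_cancel₀ hdet ?_
    linear_combination a * h2 - c * h1

namespace Polynomial

variable {F : Type*} [Field F]

lemma eval_sub_eval_of_degree_le_two {f : F[X]} (hf : f.degree ≤ 2) (a b : F) :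
    f.eval a - f.eval b = f.coeff 1 * (a - b) + f.coeff 2 * (a ^ 2 - b ^ 2) := by
  have hlt : f.natDegree < 3 := by
    have : f.natDegree ≤ 2 := natDegree_le_of_degree_le hf
    omega
  simp only [eval_eq_sum_range' hlt, sum_range_succ, sum_range_zero]
  ring

lemma eq_C_of_degree_le_two_of_coeff_eq_zero {g : F[X]} (hg : g.degree ≤ 2) (h1 : g.coeff 1 = 0)
    (h2 : g.coeff 2 = 0) : g = C (g.coeff 0) := by
  ext (_ | _ | _ | n)
  · simp
  · simp [h1]
  · simp [h2]
  · rw [coeff_C, if_neg (by omega)]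
    exact coeff_eq_zero_of_degree_lt (hg.trans_lt (by exact_mod_cast (by omega : 2 < n + 3)))

lemma coeff_mul_sub_mul_ne_zero {f h : F[X]} (hf : f.degree ≤ 2) (hh : h.degree ≤ 2)
    (hind : ∀ l m : F, (l, m) ≠ (0, 0) → ∀ a : F, C l * f + C m * h ≠ C a) :
    f.coeff 1 * h.coeff 2 - f.coeff 2 * h.coeff 1 ≠ 0 := by
  intro hdet
  obtain ⟨v, hv0, hv⟩ := (Matrix.exists_mulVec_eq_zero_iff (M := !![f.coeff 1, h.coeff 1;
    f.coeff 2, h.coeff 2])).2 (by rw [Matrix.det_fin_two_of]; linear_combination hdet)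
  have hv1 : f.coeff 1 * v 0 + h.coeff 1 * v 1 = 0 := by
    simpa [Matrix.mulVec, dotProduct, Fin.sum_univ_two] using congrFun hv 0
  have hv2 : f.coeff 2 * v 0 + h.coeff 2 * v 1 = 0 := by
    simpa [Matrix.mulVec, dotProduct, Fin.sum_univ_two] using congrFun hv 1
  refine hind (v 0) (v 1) ?_ _ (eq_C_of_degree_le_two_of_coeff_eq_zero ?_ ?_ ?_)
  · contrapose! hv0
    ext i; fin_cases i <;> simp_all
  · rw [← smul_eq_C_mul, ← smul_eq_C_mul]
    exact (degree_add_le _ _).trans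
      (max_le ((degree_smul_le _ _).trans hf) ((degree_smul_le _ _).trans hh))
  · simp only [coeff_add, coeff_C_mul]; linear_combination hv1
  · simp only [coeff_add, coeff_C_mul]; linear_combination hv2

lemma injOn_sub_eval_prod {f h : F[X]} (h2 : (2 : F) ≠ 0) (hf : f.degree ≤ 2) (hh : h.degree ≤ 2)
    (hdet : f.coeff 1 * h.coeff 2 - f.coeff 2 * h.coeff 1 ≠ 0) :
    Set.InjOn (fun p : F × F => (f.eval p.1, h.eval p.1) - (f.eval p.2, h.eval p.2))
      {p | p.1 ≠ p.2} := by
  have hcomp : (fun p : F × F => (f.eval p.1, h.eval p.1) - (f.eval p.2, h.eval p.2)) =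
      (fun v : F × F => (f.coeff 1 * v.1 + f.coeff 2 * v.2, h.coeff 1 * v.1 + h.coeff 2 * v.2)) ∘
        (fun p : F × F => (p.1 - p.2, p.1 ^ 2 - p.2 ^ 2)) := by
    funext p
    simp only [Prod.mk_sub_mk, Function.comp_apply, eval_sub_eval_of_degree_le_two hf,
      eval_sub_eval_of_degree_le_two hh]
  rw [hcomp]
  exact (injective_of_mul_sub_mul_ne_zero hdet).comp_injOn (injOn_sub_sq_sub_sq h2)

end Polynomial

/-- **Solymosi, Hart–Li–Shen.** There is an absolute `c > 0` such that
for every odd finite field `F_q` and polynomials `f, h` of degree at most 2 with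
`λ·f + μ·h` nonconstant for all `(λ,μ) ≠ (0,0)`, and all nonempty `A₁, A₂, A₃ ⊆ F_q`,
`max(|f(A₁)+A₂|, |h(A₁)+A₃|) ≥ c·min(√(|A₁|q), √(|A₁|²|A₂||A₃|/q))`. -/
theorem sum_product_polynomials :
    ∃ c : ℝ, 0 < c ∧
      ∀ (F : Type) [Field F] [Fintype F] [DecidableEq F],
        Odd (Fintype.card F) →
        ∀ (f h : Polynomial F), f.degree ≤ 2 → h.degree ≤ 2 →
        (∀ l m : F, (l, m) ≠ (0, 0) →
          ∀ a : F, Polynomial.C l * f + Polynomial.C m * h ≠ Polynomial.C a) →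
        ∀ (A₁ A₂ A₃ : Finset F),
          A₁.Nonempty → A₂.Nonempty → A₃.Nonempty →
          c * min (Real.sqrt ((A₁.card : ℝ) * (Fintype.card F : ℝ)))
              (Real.sqrt ((A₁.card : ℝ) ^ 2 * (A₂.card : ℝ) * (A₃.card : ℝ)
                / (Fintype.card F : ℝ)))
            ≤ max (((A₁.image (fun x => f.eval x) + A₂).card : ℝ))
                (((A₁.image (fun x => h.eval x) + A₃).card : ℝ)) := by
  refine ⟨1 / 2, by norm_num, fun F _ _ _ hodd f h hf hh hind A₁ A₂ A₃ _ hA₂ hA₃ => ?_⟩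
  have hΦ := Polynomial.injOn_sub_eval_prod (FiniteField.two_ne_zero_of_odd_card hodd) hf hh
    (Polynomial.coeff_mul_sub_mul_ne_zero hf hh hind)
  have hcount := card_mul_card_le_of_injOn_sub (Φ := fun x => (f.eval x, h.eval x)) hΦ
    (by rw [Fintype.card_prod, sq]) (A := A₁) (B := A₂ ×ˢ A₃)
    (X := (A₁.image (fun x => f.eval x) + A₂) ×ˢ (A₁.image (fun x => h.eval x) + A₃))
    (fun a ha b hb => mem_product.2
      ⟨add_mem_add (mem_image_of_mem _ ha) (mem_product.1 hb).1,
        add_mem_add (mem_image_of_mem _ ha) (mem_product.1 hb).2⟩)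
  rw [card_product, card_product, Fintype.card_prod] at hcount
  push_cast at hcount
  rw [mul_assoc _ (A₂.card : ℝ)]
  refine half_min_sqrt_le_max (by positivity) (by positivity) (by positivity) (by positivity)
    (by positivity) ?_
  rwa [mul_div_mul_left _ _ (by positivity)] at hcount
end

section
/- Let G be a finite abelian group and let A ⊆ G be a Sidon set with |A| ≥ √|G| − 1. For X ⊆ G write E(X) = |A ∩ X| − |A||X|/|G|. Then for every subset B ⊆ G and every nonempty subset C ⊆ G there exists c ∈ C such that |E(B)| ≤ 2·√(√|G| · |B|/|C|) + |E(B \ (B + c))| + |E((B + c) \ B)|, where B + c = {b + c : b ∈ B}. -/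
/-!
Write `E` for the discrepancy. As `E` is additive over disjoint unions,
`E(B) − E(B + c) = E(B \ (B + c)) − E((B + c) \ B)`, so it suffices to find `c ∈ C` with
`|E(B + c)| ≤ 2√(√|G|·|B|/|C|)`. Over all translates, `∑ₓ |A ∩ (B + x)| = |A||B|`, and since
for `b ≠ b'` at most one `x` has `b + x, b' + x ∈ A` (Sidon), `∑ₓ |A ∩ (B + x)|² ≤ |A||B| + |B|²`.
With `√|G| − 1 ≤ |A| ≤ √|G| + 1` this gives `∑ₓ E(B + x)² ≤ 4√|G|·|B|`, and some `c ∈ C`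
has `E(B + c)²` at most `4√|G|·|B|/|C|`.
-/

open Finset

section Discrepancy

variable {G : Type*} [Fintype G] [DecidableEq G]

noncomputable def discrepancy (A X : Finset G) : ℝ :=
  #(A ∩ X) - #A * #X / Fintype.card G

lemma discrepancy_eq_inter_add_sdiff (A X Y : Finset G) :
    discrepancy A X = discrepancy A (X ∩ Y) + discrepancy A (X \ Y) := by
  have hA : #(A ∩ X) = #(A ∩ (X ∩ Y)) + #(A ∩ (X \ Y)) := by
    rw [← card_inter_add_card_sdiff (A ∩ X) Y, inter_assoc, inter_sdiff_assoc]
  have hX : #X = #(X ∩ Y) + #(X \ Y) := (card_inter_add_card_sdiff X Y).symm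
  unfold discrepancy
  rw [hA, hX]
  push_cast
  ring

lemma discrepancy_sub_discrepancy (A X Y : Finset G) :
    discrepancy A X - discrepancy A Y = discrepancy A (X \ Y) - discrepancy A (Y \ X) := by
  rw [discrepancy_eq_inter_add_sdiff A X Y, discrepancy_eq_inter_add_sdiff A Y X, inter_comm Y X]
  ring

lemma abs_discrepancy_le (A X Y : Finset G) :
    |discrepancy A X| ≤
      |discrepancy A Y| + |discrepancy A (X \ Y)| + |discrepancy A (Y \ X)| := by
  have hXY : discrepancy A X =
      discrepancy A Y + (discrepancy A (X \ Y) - discrepancy A (Y \ X)) := by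
    rw [← discrepancy_sub_discrepancy]
    ring
  rw [hXY, add_assoc]
  exact (abs_add_le _ _).trans (add_le_add_right (abs_sub _ _) _)

end Discrepancy

lemma Finset.exists_mem_abs_le_sqrt_of_sum_sq_le {ι : Type*} [Fintype ι] {C : Finset ι}
    (hC : C.Nonempty) {f : ι → ℝ} {M : ℝ} (h : ∑ i, f i ^ 2 ≤ M) :
    ∃ c ∈ C, |f c| ≤ √(M / #C) := by
  have hsum : ∑ c ∈ C, f c ^ 2 ≤ ∑ _c ∈ C, M / #C := by
    rw [sum_const, nsmul_eq_mul, mul_div_cancel₀ _ (by exact_mod_cast hC.card_pos.ne')]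
    exact (sum_le_univ_sum_of_nonneg fun i => sq_nonneg (f i)).trans h
  obtain ⟨c, hcC, hc⟩ := exists_le_of_sum_le hC hsum
  exact ⟨c, hcC, Real.abs_le_sqrt hc⟩

section Sidon

variable {G : Type*} [AddCommGroup G] [DecidableEq G]

def IsSidon (A : Finset G) : Prop :=
  ∀ a ∈ A, ∀ b ∈ A, ∀ c ∈ A, ∀ d ∈ A, a - b = c - d → a - b ≠ 0 → a = c ∧ b = d

lemma card_inter_image_add (A B : Finset G) (x : G) :
    #(A ∩ B.image (· + x)) = #{b ∈ B | b + x ∈ A} := by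
  rw [inter_comm, ← filter_mem_eq_inter, filter_image,
    card_image_of_injective _ (add_left_injective x)]

variable [Fintype G]

lemma card_filter_add_mem (A : Finset G) (b : G) : #{x | b + x ∈ A} = #A := by
  rw [card_filter]
  refine (Fintype.sum_equiv (Equiv.addLeft b) _ (fun y => if y ∈ A then 1 else 0)
    fun _ => rfl).trans ?_
  simp

lemma IsSidon.card_offDiag_lt {A : Finset G} (hA : IsSidon A) :
    #A.offDiag < Fintype.card G := by
  have hinj : #A.offDiag ≤ #(univ.erase (0 : G)) := by
    refine card_le_card_of_injOn (fun p => p.1 - p.2) ?_ ?_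
    · intro p hp
      rw [mem_coe, mem_offDiag] at hp
      exact mem_erase.2 ⟨sub_ne_zero.2 hp.2.2, mem_univ _⟩
    · intro p hp q hq hpq
      rw [mem_coe, mem_offDiag] at hp hq
      have h := hA p.1 hp.1 p.2 hp.2.1 q.1 hq.1 q.2 hq.2.1 hpq (sub_ne_zero.2 hp.2.2)
      exact Prod.ext h.1 h.2
  rw [card_erase_of_mem (mem_univ 0), card_univ] at hinj
  have := Fintype.card_pos (α := G)
  omega

lemma IsSidon.card_le_sqrt_add_one {A : Finset G} (hA : IsSidon A) :
    (#A : ℝ) ≤ √(Fintype.card G) + 1 := by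
  have hlt := hA.card_offDiag_lt
  rw [offDiag_card] at hlt
  have hreal : (#A : ℝ) * #A < Fintype.card G + #A := by
    have : #A * #A < Fintype.card G + #A := by omega
    exact_mod_cast this
  have hs := Real.sq_sqrt (Nat.cast_nonneg (α := ℝ) (Fintype.card G))
  nlinarith [Real.sqrt_nonneg (Fintype.card G)]

lemma sum_card_inter_image_add (A B : Finset G) :
    ∑ x, #(A ∩ B.image (· + x)) = #A * #B := by
  simp_rw [card_inter_image_add, card_filter]
  rw [sum_comm]
  simp_rw [← card_filter, card_filter_add_mem, sum_const, smul_eq_mul, mul_comm]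

lemma sum_sq_card_inter_image_add (A B : Finset G) :
    ∑ x, #(A ∩ B.image (· + x)) ^ 2 = ∑ b ∈ B, ∑ b' ∈ B, #{x | b + x ∈ A ∧ b' + x ∈ A} := by
  simp_rw [card_inter_image_add, card_filter, sq, sum_mul_sum, ite_zero_mul_ite_zero, one_mul]
  rw [sum_comm]
  exact sum_congr rfl fun b _ => sum_comm

lemma IsSidon.card_common_translates_le_one {A : Finset G} (hA : IsSidon A) {b b' : G}
    (hb : b ≠ b') : #{x | b + x ∈ A ∧ b' + x ∈ A} ≤ 1 := by
  refine card_le_one.2 fun x hx y hy => ?_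
  simp only [mem_filter, mem_univ, true_and] at hx hy
  have h := hA _ hx.1 _ hx.2 _ hy.1 _ hy.2 (by abel) (by simpa [sub_ne_zero] using hb)
  exact add_left_cancel h.1

lemma IsSidon.sum_sq_card_inter_image_add_le {A : Finset G} (hA : IsSidon A) (B : Finset G) :
    ∑ x, #(A ∩ B.image (· + x)) ^ 2 ≤ #A * #B + #B ^ 2 := by
  have hrow : ∀ b ∈ B, ∑ b' ∈ B, #{x | b + x ∈ A ∧ b' + x ∈ A} ≤ #A + #B := by
    intro b hb
    calc ∑ b' ∈ B, #{x | b + x ∈ A ∧ b' + x ∈ A}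
        ≤ ∑ b' ∈ B, ((if b = b' then #A else 0) + 1) := by
          refine sum_le_sum fun b' _ => ?_
          by_cases hbb : b = b'
          · simp [← hbb, card_filter_add_mem]
          · simpa [hbb] using hA.card_common_translates_le_one hbb
      _ = #A + #B := by simp [sum_add_distrib, hb]
  calc ∑ x, #(A ∩ B.image (· + x)) ^ 2 ≤ ∑ _b ∈ B, (#A + #B) := by
        rw [sum_sq_card_inter_image_add]; exact sum_le_sum hrow
    _ = #A * #B + #B ^ 2 := by rw [sum_const, smul_eq_mul]; ring

end Sidon

section Variance

variable {G : Type*} [AddCommGroup G] [Fintype G] [DecidableEq G]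

lemma sum_sq_discrepancy_image_add (A B : Finset G) :
    ∑ x, discrepancy A (B.image (· + x)) ^ 2 =
      ∑ x, (#(A ∩ B.image (· + x)) : ℝ) ^ 2 - (#A * #B) ^ 2 / Fintype.card G := by
  have hn : (Fintype.card G : ℝ) ≠ 0 := by exact_mod_cast Fintype.card_ne_zero
  have hsum : ∑ x, (#(A ∩ B.image (· + x)) : ℝ) = #A * #B := by
    exact_mod_cast sum_card_inter_image_add A B
  simp_rw [discrepancy, card_image_of_injective B (add_left_injective _), sub_sq,
    sum_add_distrib, sum_sub_distrib, ← sum_mul, ← mul_sum, hsum, sum_const, card_univ,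
    nsmul_eq_mul]
  field_simp
  ring

lemma IsSidon.sum_sq_discrepancy_image_add_le {A : Finset G} (hA : IsSidon A)
    (hcard : √(Fintype.card G) - 1 ≤ #A) (B : Finset G) :
    ∑ x, discrepancy A (B.image (· + x)) ^ 2 ≤ 4 * √(Fintype.card G) * #B := by
  set s := √(Fintype.card G)
  have hs : s ^ 2 = Fintype.card G := Real.sq_sqrt (Nat.cast_nonneg _)
  have hs1 : 1 ≤ s := Real.one_le_sqrt.2 (by exact_mod_cast Fintype.card_pos)
  have hA' : (#A : ℝ) ≤ s + 1 := hA.card_le_sqrt_add_one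
  have hB : (#B : ℝ) ≤ s ^ 2 := by rw [hs]; exact_mod_cast card_le_univ B
  have hsq : ∑ x, (#(A ∩ B.image (· + x)) : ℝ) ^ 2 ≤ #A * #B + #B ^ 2 := by
    exact_mod_cast hA.sum_sq_card_inter_image_add_le B
  have hgap : (#B : ℝ) ^ 2 * (s ^ 2 - #A ^ 2) ≤ 2 * s * #B * s ^ 2 := by
    rcases le_total (s ^ 2) (#A ^ 2) with h | h
    · have : (#B : ℝ) ^ 2 * (s ^ 2 - #A ^ 2) ≤ 0 :=
        mul_nonpos_of_nonneg_of_nonpos (by positivity) (by linarith)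
      have : 0 ≤ 2 * s * #B * s ^ 2 := by positivity
      linarith
    · have h2s : s ^ 2 - #A ^ 2 ≤ 2 * s := by nlinarith
      calc (#B : ℝ) ^ 2 * (s ^ 2 - #A ^ 2) ≤ #B * s ^ 2 * (2 * s) := by
            rw [sq (#B : ℝ)]; gcongr
        _ = 2 * s * #B * s ^ 2 := by ring
  have hgap' : (#B : ℝ) ^ 2 - (#A * #B) ^ 2 / s ^ 2 ≤ 2 * s * #B := by
    rw [← div_le_iff₀ (by positivity)] at hgap
    calc (#B : ℝ) ^ 2 - (#A * #B) ^ 2 / s ^ 2 = (#B : ℝ) ^ 2 * (s ^ 2 - #A ^ 2) / s ^ 2 := by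
          field_simp
      _ ≤ 2 * s * #B := hgap
  have hAB : (#A : ℝ) * #B ≤ 2 * s * #B := by gcongr; linarith
  rw [sum_sq_discrepancy_image_add, ← hs]
  linarith

end Variance

/-- Let `G` be a finite abelian group and `A ⊆ G` a Sidon set with
`|A| ≥ √|G| − 1`. With `E(X) = |A ∩ X| − |A||X|/|G|`, for every `B ⊆ G` and every
nonempty `C ⊆ G` there is `c ∈ C` with
`|E(B)| ≤ 2·√(√|G|·|B|/|C|) + |E(B \ (B+c))| + |E((B+c) \ B)|`. -/
theorem sidon_translate_error_bound {G : Type*} [AddCommGroup G] [Fintype G]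
    [DecidableEq G] (A : Finset G)
    (hA : ∀ a ∈ A, ∀ b ∈ A, ∀ c ∈ A, ∀ d ∈ A,
      a - b = c - d → a - b ≠ 0 → a = c ∧ b = d)
    (hcard : Real.sqrt (Fintype.card G) - 1 ≤ (A.card : ℝ))
    (B C : Finset G) (hC : C.Nonempty) :
    ∃ c ∈ C,
      |((A ∩ B).card : ℝ) - (A.card : ℝ) * B.card / (Fintype.card G : ℝ)|
        ≤ 2 * Real.sqrt (Real.sqrt (Fintype.card G) * B.card / C.card)
          + |((A ∩ (B \ B.image (· + c))).card : ℝ)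
              - (A.card : ℝ) * (B \ B.image (· + c)).card / (Fintype.card G : ℝ)|
          + |((A ∩ (B.image (· + c) \ B)).card : ℝ)
              - (A.card : ℝ) * (B.image (· + c) \ B).card / (Fintype.card G : ℝ)| := by
  obtain ⟨c, hcC, hc⟩ := exists_mem_abs_le_sqrt_of_sum_sq_le hC
    (IsSidon.sum_sq_discrepancy_image_add_le hA hcard B)
  refine ⟨c, hcC, ?_⟩
  have htwo : √(4 * √(Fintype.card G) * #B / #C) = 2 * √(√(Fintype.card G) * #B / #C) := by
    rw [mul_assoc, mul_div_assoc, Real.sqrt_mul zero_le_four,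
      show (4 : ℝ) = 2 ^ 2 by norm_num, Real.sqrt_sq zero_le_two]
  show |discrepancy A B| ≤ 2 * √(√(Fintype.card G) * #B / #C)
    + |discrepancy A (B \ B.image (· + c))| + |discrepancy A (B.image (· + c) \ B)|
  grw [abs_discrepancy_le A B (B.image (· + c)), hc, htwo]
end
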